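/- If X is n-star-Menger, then X is strongly (n+1)-star-Menger. -/
import Mathlib


open Set Filter Topology

/-- `𝒰` is an open cover of the space `X`. -/
def IsOpenCover {X : Type} [TopologicalSpace X] (𝒰 : Set (Set X)) : Prop :=
  (∀ u ∈ 𝒰, IsOpen u) ∧ ⋃₀ 𝒰 = Set.univ

/-- The star of a set `A` with respect to a collection `𝒰`. -/
def st {X : Type} (A : Set X) (𝒰 : Set (Set X)) : Set X :=
  ⋃₀ {u ∈ 𝒰 | (u ∩ A).Nonempty}
/-- The `n`-fold iterated star `St^n(A,𝒰)`. -/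
def iterSt {X : Type} : ℕ → Set X → Set (Set X) → Set X
  | 0, A, _ => A
  | n + 1, A, 𝒰 => st (iterSt n A 𝒰) 𝒰

/-- `X` is `n`-star-Menger. -/
def NStarMenger (X : Type) [TopologicalSpace X] (n : ℕ) : Prop :=
  ∀ 𝒰 : ℕ → Set (Set X), (∀ k, IsOpenCover (𝒰 k)) →
    ∃ 𝒱 : ℕ → Set (Set X), (∀ k, (𝒱 k).Finite ∧ 𝒱 k ⊆ 𝒰 k) ∧
      ∀ x : X, ∃ k, x ∈ iterSt n (⋃₀ 𝒱 k) (𝒰 k)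

/-- `X` is strongly `n`-star-Menger. -/
def StronglyNStarMenger (X : Type) [TopologicalSpace X] (n : ℕ) : Prop :=
  ∀ 𝒰 : ℕ → Set (Set X), (∀ k, IsOpenCover (𝒰 k)) →
    ∃ F : ℕ → Set X, (∀ k, (F k).Finite) ∧
      ∀ x : X, ∃ k, x ∈ iterSt n (F k) (𝒰 k)

lemma st_mono {X : Type} {A B : Set X} (𝒰 : Set (Set X)) (hAB : A ⊆ B) :
    st A 𝒰 ⊆ st B 𝒰 := by
  rintro x ⟨u, ⟨hu, y, hy⟩, hx⟩
  exact ⟨u, ⟨hu, y, hy.1, hAB hy.2⟩, hx⟩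

lemma iterSt_mono {X : Type} {A B : Set X} (n : ℕ) (𝒰 : Set (Set X)) (hAB : A ⊆ B) :
    iterSt n A 𝒰 ⊆ iterSt n B 𝒰 := by
  induction n with
  | zero => exact hAB
  | succ m ih => exact st_mono 𝒰 ih

lemma iterSt_st {X : Type} (n : ℕ) (A : Set X) (𝒰 : Set (Set X)) :
    iterSt n (st A 𝒰) 𝒰 = iterSt (n + 1) A 𝒰 := by
  induction n with
  | zero => rfl
  | succ m ih => show st _ _ = st _ _ ; rw [ih]

theorem stmt (X : Type) [TopologicalSpace X] (n : ℕ)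
    (h : NStarMenger X n) : StronglyNStarMenger X (n + 1) := by
  intro 𝒰 h𝒰
  obtain ⟨𝒱, h𝒱, hcov⟩ := h 𝒰 h𝒰
  classical
  set pt : Set X → Set X := fun v => if h : v.Nonempty then {h.choose} else ∅ with hpt
  refine ⟨fun k => ⋃ v ∈ 𝒱 k, pt v, ?_, ?_⟩
  · intro k
    refine Set.Finite.biUnion (h𝒱 k).1 (fun v _ => ?_)
    by_cases hv : v.Nonempty <;> simp [hpt, hv]
  · intro x
    obtain ⟨k, hk⟩ := hcov x
    refine ⟨k, ?_⟩
    rw [← iterSt_st]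
    refine iterSt_mono n (𝒰 k) ?_ hk
    rintro y ⟨v, hv, hyv⟩
    have hvne : v.Nonempty := ⟨y, hyv⟩
    refine ⟨v, ⟨(h𝒱 k).2 hv, hvne.choose, ?_, ?_⟩, hyv⟩
    · exact hvne.choose_spec
    · exact Set.mem_biUnion hv (by simp [hpt, hvne])
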